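/- arXiv:2602.12399 — 10 statements merged into one kernel-verified Lean document; each statement's English description precedes it below -/
import Mathlib

section
/- Let (X,d) be a metric space, f : X → X a map, and R : X → X an isometric involution (R ∘ R = id and d(R x, R y) = d(x,y) for all x,y) commuting with f (R ∘ f = f ∘ R). Define the set-valued map F : X → Set X by F(x) = {f(x), R(f(x))}. If f has the shadowing property (for every ε > 0 there exists δ > 0 such that every sequence (x_n) with d(f(x_n), x_{n+1}) < δ for all n satisfies d(f^n(z), x_n) < ε for all n, for some z ∈ X), then F has the set-valued shadowing property. -/
/-- An orbit of a set-valued map `F`: a sequence with `z (n+1) ∈ F (z n)` for all `n`. -/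
def IsOrbit {X : Type*} (F : X → Set X) (z : ℕ → X) : Prop :=
  ∀ n, z (n + 1) ∈ F (z n)

/-- A `δ`-pseudo-orbit of a set-valued map `F`. -/
def IsPseudoOrbit {X : Type*} [MetricSpace X] (F : X → Set X) (δ : ℝ) (x : ℕ → X) : Prop :=
  ∀ n, Metric.infDist (x (n + 1)) (F (x n)) < δ

/-- The shadowing property for a set-valued map. -/
def SVShadowing {X : Type*} [MetricSpace X] (F : X → Set X) : Prop :=
  ∀ ε > (0 : ℝ), ∃ δ > (0 : ℝ), ∀ x : ℕ → X, IsPseudoOrbit F δ x →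
    ∃ z : ℕ → X, IsOrbit F z ∧ ∀ n, dist (z n) (x n) < ε

theorem stmt0 {X : Type*} [MetricSpace X] (f R : X → X)
    (hRR : ∀ x, R (R x) = x)
    (hRiso : ∀ x y, dist (R x) (R y) = dist x y)
    (hcomm : ∀ x, R (f x) = f (R x))
    (hshadow : ∀ ε > (0 : ℝ), ∃ δ > (0 : ℝ), ∀ x : ℕ → X,
      (∀ n, dist (f (x n)) (x (n + 1)) < δ) →
      ∃ z : X, ∀ n, dist (f^[n] z) (x n) < ε) :
    SVShadowing (fun x => ({f x, R (f x)} : Set X)) := by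
  classical
  intro ε hε
  obtain ⟨δ, hδ, hδsh⟩ := hshadow ε hε
  refine ⟨δ, hδ, ?_⟩
  intro x hx
  -- sign function S
  set S : Bool → X → X := fun c p => if c then R p else p with hS
  have hSiso : ∀ c p q, dist (S c p) (S c q) = dist p q := by
    intro c p q; cases c <;> simp [hS, hRiso]
  have hSinv : ∀ c p, S c (S c p) = p := by
    intro c p; cases c <;> simp [hS, hRR]
  have hSf : ∀ c p, f (S c p) = S c (f p) := by
    intro c p; cases c <;> simp [hS, ← hcomm]
  have hSxor : ∀ c d p, S (xor c d) p = S c (S d p) := by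
    intro c d p; cases c <;> cases d <;> simp [hS, hRR]
  -- from the pseudo-orbit condition, extract disjunctions
  have hd : ∀ n, dist (x (n + 1)) (f (x n)) < δ ∨ dist (x (n + 1)) (R (f (x n))) < δ := by
    intro n
    have hne : ({f (x n), R (f (x n))} : Set X).Nonempty := ⟨f (x n), by simp⟩
    have := hx n
    rw [Metric.infDist_lt_iff hne] at this
    obtain ⟨w, hw, hwd⟩ := this
    rcases hw with hw | hw
    · exact Or.inl (hw ▸ hwd)
    · exact Or.inr (hw ▸ hwd)
  set b : ℕ → Bool := fun n => decide ¬ (dist (x (n + 1)) (f (x n)) < δ) with hb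
  have hbF : ∀ n, b n = false → dist (x (n + 1)) (f (x n)) < δ := by
    intro n hn; simpa [hb] using hn
  have hbT : ∀ n, b n = true → dist (x (n + 1)) (R (f (x n))) < δ := by
    intro n hn
    rcases hd n with h | h
    · exact absurd h (by simpa [hb] using hn)
    · exact h
  set a : ℕ → Bool := fun n => Nat.rec false (fun k c => xor c (b k)) n with ha
  have haS : ∀ n, a (n + 1) = xor (a n) (b n) := fun n => rfl
  set y : ℕ → X := fun n => S (a n) (x n) with hy
  have hyp : ∀ n, dist (f (y n)) (y (n + 1)) < δ := by
    intro n
    have : dist (f (y n)) (y (n + 1))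
        = dist (f (x n)) (S (b n) (x (n + 1))) := by
      rw [hy]
      simp only [hSf, haS, hSxor]
      rw [hSiso]
    rw [this]
    cases hc : b n with
    | false => rw [dist_comm]; simpa [hS] using hbF n hc
    | true =>
      have := hbT n hc
      rw [dist_comm] at this
      calc dist (f (x n)) (S true (x (n + 1))) = dist (R (f (x n))) (R (R (x (n+1)))) := by
            rw [hRiso]; simp [hS]
        _ < δ := by rw [hRR]; exact this
  obtain ⟨z, hz⟩ := hδsh y hyp
  refine ⟨fun n => S (a n) (f^[n] z), ?_, ?_⟩
  · intro n
    have hfz : f (S (a n) (f^[n] z)) = S (a n) (f^[n + 1] z) := by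
      rw [hSf, Function.iterate_succ_apply']
    cases hc : b n with
    | false =>
      have hA : a (n + 1) = a n := by rw [haS, hc]; simp
      left
      show S (a (n + 1)) (f^[n + 1] z) = f (S (a n) (f^[n] z))
      rw [hA, hfz]
    | true =>
      have hA : a (n + 1) = !(a n) := by rw [haS, hc]; simp
      right
      show S (a (n + 1)) (f^[n + 1] z) ∈ ({R (f (S (a n) (f^[n] z)))} : Set X)
      rw [hfz, hA]
      cases h : a n <;> simp [hS, hRR]
  · intro n
    calc dist (S (a n) (f^[n] z)) (x n)
        = dist (S (a n) (S (a n) (f^[n] z))) (S (a n) (x n)) := by rw [hSiso]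
      _ = dist (f^[n] z) (y n) := by rw [hSinv, hy]
      _ < ε := hz n
end

section
/- Let (X,d) be a metric space, f : X → X a map, and R : X → X an isometric involution (R ∘ R = id and d(R x, R y) = d(x,y) for all x,y) commuting with f (R ∘ f = f ∘ R). Define the set-valued map F : X → Set X by F(x) = {f(x), R(f(x))}. If f has the periodic shadowing property (for every ε > 0 there exists δ > 0 such that every periodic sequence (x_n) with d(f(x_n), x_{n+1}) < δ for all n is ε-shadowed by the forward orbit (f^n(z)) of some periodic point z of f), then F has the set-valued periodic shadowing property. -/
/-- A periodic sequence: there is `k ≥ 1` with `x (n + k) = x n` for all `n`. -/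
def IsPeriodicSeq {X : Type*} (x : ℕ → X) : Prop :=
  ∃ k : ℕ, 1 ≤ k ∧ ∀ n, x (n + k) = x n

/-- The periodic shadowing property for a set-valued map. -/
def SVPeriodicShadowing {X : Type*} [MetricSpace X] (F : X → Set X) : Prop :=
  ∀ ε > (0 : ℝ), ∃ δ > (0 : ℝ), ∀ x : ℕ → X, IsPseudoOrbit F δ x → IsPeriodicSeq x →
    ∃ z : ℕ → X, IsOrbit F z ∧ IsPeriodicSeq z ∧ ∀ n, dist (z n) (x n) < ε

open Function Finset

namespace Function.Involutive

variable {α : Type*} {g : α → α}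

protected lemma iterate (hg : Involutive g) (n : ℕ) : Involutive g^[n] := fun x => by
  rw [← iterate_add_apply, ← two_mul, hg.iterate_two_mul, id]

lemma iterate_mem_pair (hg : Involutive g) (n : ℕ) (x : α) : g^[n] x ∈ ({x, g x} : Set α) := by
  obtain ⟨k, rfl | rfl⟩ := Nat.even_or_odd' n
  · exact .inl (by rw [hg.iterate_two_mul, id_eq])
  · exact .inr (by rw [hg.iterate_two_mul_add_one]; rfl)

end Function.Involutive

lemma Function.IsPeriodicPt.periodic_iterate_apply {α : Type*} {f : α → α} {m : ℕ} {z : α}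
    (hz : IsPeriodicPt f m z) : Periodic (f^[·] z) m := fun n => by
  simp only [iterate_add_apply, hz.eq]

protected lemma Isometry.iterate {X : Type*} [PseudoEMetricSpace X] {g : X → X} (hg : Isometry g)
    (n : ℕ) : Isometry g^[n] := by
  induction n with
  | zero => exact isometry_id
  | succ n ih => exact ih.comp hg

lemma Isometry.dist_apply_comm_of_involutive {X : Type*} [PseudoMetricSpace X] {g : X → X}
    (hi : Isometry g) (hg : Involutive g) (p q : X) : dist (g p) q = dist p (g q) := by
  conv_lhs => rw [← hg q]
  exact hi.dist_eq p (g q)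

section Twist

variable {X : Type*}

def twist (R : X → X) (t : ℕ → ℕ) (x : ℕ → X) (n : ℕ) : X :=
  R^[∑ i ∈ range n, t i] (x n)

variable {f R : X → X}

lemma twist_succ (t : ℕ → ℕ) (x : ℕ → X) (n : ℕ) :
    twist R t x (n + 1) = R^[∑ i ∈ range n, t i] (R^[t n] (x (n + 1))) := by
  rw [twist, sum_range_succ, iterate_add_apply]

lemma dist_apply_twist_twist_succ [MetricSpace X] (hR : Involutive R) (hRi : Isometry R)
    (hc : Function.Commute R f) (t : ℕ → ℕ) (x : ℕ → X) (n : ℕ) :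
    dist (f (twist R t x n)) (twist R t x (n + 1)) = dist (R^[t n] (f (x n))) (x (n + 1)) := by
  rw [twist_succ, twist, ← (hc.iterate_left _).eq, (hRi.iterate _).dist_eq,
    (hRi.iterate _).dist_apply_comm_of_involutive (hR.iterate _)]

lemma isOrbit_twist_iterate (hR : Involutive R) (hc : Function.Commute R f) (t : ℕ → ℕ) (z : X) :
    IsOrbit (fun a => ({f a, R (f a)} : Set X)) (twist R t (f^[·] z)) := fun n => by
  have hstep : twist R t (f^[·] z) (n + 1) = R^[t n] (f (twist R t (f^[·] z) n)) := by
    rw [twist_succ, twist, iterate_succ_apply', ← (hc.iterate_left _).eq,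
      (Function.Commute.iterate_iterate_self R _ _).eq]
  rw [hstep]
  exact hR.iterate_mem_pair _ _

lemma periodic_iterate_sum_range (hR : Involutive R) {t : ℕ → ℕ} {p : ℕ} (ht : Periodic t p) :
    Periodic (fun n => R^[∑ i ∈ range n, t i]) (2 * p) := by
  have hsum : ∀ n, ∑ i ∈ range (n + p), t i = ∑ i ∈ range n, t i + ∑ i ∈ range p, t i := by
    intro n
    rw [add_comm n, sum_range_add, add_comm]
    simp only [add_comm p, ht _]
  intro n
  dsimp only
  rw [two_mul, ← add_assoc, hsum, hsum, add_assoc, ← two_mul, iterate_add,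
    hR.iterate_two_mul, comp_id]

lemma periodic_twist (hR : Involutive R) {t : ℕ → ℕ} {x : ℕ → X} {p : ℕ} (ht : Periodic t p)
    (hx : Periodic x (2 * p)) : Periodic (twist R t x) (2 * p) := fun n => by
  rw [twist, twist, hx n]
  exact congrFun (periodic_iterate_sum_range hR ht n) (x n)

lemma exists_periodic_iterate_dist_lt [MetricSpace X] {δ : ℝ} {x : ℕ → X} {k : ℕ}
    (hx : IsPseudoOrbit (fun a => ({f a, R (f a)} : Set X)) δ x) (hxk : Periodic x k) :
    ∃ t : ℕ → ℕ, Periodic t k ∧ ∀ n, dist (R^[t n] (f (x n))) (x (n + 1)) < δ := by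
  refine ⟨fun n => if dist (f (x n)) (x (n + 1)) < δ then 0 else 1, fun n => ?_, fun n => ?_⟩
  · simp only [add_right_comm n k 1, hxk n, hxk (n + 1)]
  · dsimp only
    split_ifs with h
    · exact h
    obtain ⟨y, hy, hyx⟩ := (Metric.infDist_lt_iff ⟨_, Set.mem_insert _ _⟩).1 (hx n)
    rcases hy with rfl | rfl
    · exact absurd (dist_comm (x (n + 1)) _ ▸ hyx) h
    · simpa [dist_comm] using hyx

end Twist

theorem stmt1 {X : Type*} [MetricSpace X] (f R : X → X)
    (hRR : ∀ x, R (R x) = x)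
    (hRiso : ∀ x y, dist (R x) (R y) = dist x y)
    (hcomm : ∀ x, R (f x) = f (R x))
    (hpshadow : ∀ ε > (0 : ℝ), ∃ δ > (0 : ℝ), ∀ x : ℕ → X,
      (∀ n, dist (f (x n)) (x (n + 1)) < δ) → IsPeriodicSeq x →
      ∃ z : X, (∃ m : ℕ, 1 ≤ m ∧ f^[m] z = z) ∧ ∀ n, dist (f^[n] z) (x n) < ε) :
    SVPeriodicShadowing (fun x => ({f x, R (f x)} : Set X)) := by
  have hR : Involutive R := hRR
  have hRi : Isometry R := Isometry.of_dist_eq hRiso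
  intro ε hε
  obtain ⟨δ, hδ, hshadow⟩ := hpshadow ε hε
  refine ⟨δ, hδ, fun x hx ⟨k, hk, (hxk : Periodic x k)⟩ => ?_⟩
  obtain ⟨t, htk, ht⟩ := exists_periodic_iterate_dist_lt hx hxk
  obtain ⟨z, ⟨m, hm, (hz : IsPeriodicPt f m z)⟩, hzx⟩ := hshadow (twist R t x)
    (fun n => (dist_apply_twist_twist_succ hR hRi hcomm t x n).trans_lt (ht n))
    ⟨2 * k, by omega, periodic_twist hR htk (by simpa using hxk.nat_mul 2)⟩
  have htmk : Periodic t (m * k) := by simpa using htk.nsmul m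
  have hzmk : IsPeriodicPt f (2 * (m * k)) z := by
    simpa only [mul_left_comm] using hz.mul_const (2 * k)
  refine ⟨twist R t (f^[·] z), isOrbit_twist_iterate hR hcomm t z,
    ⟨2 * (m * k), Nat.mul_pos two_pos (Nat.mul_pos hm hk),
      periodic_twist hR htmk hzmk.periodic_iterate_apply⟩, fun n => ?_⟩
  rw [twist, (hRi.iterate _).dist_apply_comm_of_involutive (hR.iterate _)]
  exact hzx n
end

section
/- Let Σ⁺ = {0,1}^ℕ be the space of one-sided binary sequences with the metric d(x,y) = 2^{-N(x,y)} where N(x,y) = min{n ≥ 0 : x_n ≠ y_n} (and d(x,x) = 0), let σ : Σ⁺ → Σ⁺ be the shift map (σ(x))_n = x_{n+1}, and let R : Σ⁺ → Σ⁺ be the flip map (R(x))_n = 1 − x_n. Then the set-valued map F : Σ⁺ → Set Σ⁺ defined by F(x) = {σ(x), R(σ(x))} has the shadowing property. -/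
/-- The one-sided shift on binary sequences. -/
def shiftMap (x : ℕ → Bool) : ℕ → Bool := fun n => x (n + 1)

/-- The flip map `(R x) n = 1 - x n`. -/
def flipMap (x : ℕ → Bool) : ℕ → Bool := fun n => !(x n)

/-- `Σ⁺ = {0,1}^ℕ` with the metric `d(x,y) = 2^{-min{n : xₙ ≠ yₙ}}` (and `d(x,x) = 0`),
which is exactly `PiNat.metricSpace`: the set-valued map
`F(x) = {σ(x), R(σ(x))}` has the shadowing property. -/
theorem stmt2 :
    letI : MetricSpace (ℕ → Bool) := PiNat.metricSpace
    SVShadowing (fun x => ({shiftMap x, flipMap (shiftMap x)} : Set (ℕ → Bool))) := by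
  letI : MetricSpace (ℕ → Bool) := PiNat.metricSpace
  intro ε hε
  obtain ⟨N, hN⟩ : ∃ N : ℕ, (1 / 2 : ℝ) ^ N < ε :=
    exists_pow_lt_of_lt_one hε (by norm_num)
  refine ⟨(1 / 2) ^ N, by positivity, fun x hx => ?_⟩
  have key : ∀ n, ∃ c : Bool, ∀ i ≤ N, x (n + 1) i = xor (x n (i + 1)) c := by
    intro n
    obtain ⟨y, hy, hd⟩ := (Metric.infDist_lt_iff
      ⟨shiftMap (x n), Set.mem_insert _ _⟩).1 (hx n)
    rcases hy with rfl | rfl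
    · exact ⟨false, fun i hi => by
        simpa [shiftMap] using PiNat.apply_eq_of_dist_lt hd hi⟩
    · exact ⟨true, fun i hi => by
        simpa [shiftMap, flipMap] using PiNat.apply_eq_of_dist_lt hd hi⟩
  choose c hc using key
  -- cumulative flips
  let C : ℕ → Bool := fun n => Nat.rec false (fun m Cm => xor Cm (c m)) n
  have hC : ∀ n, C (n + 1) = xor (C n) (c n) := fun n => rfl
  -- the shadowing orbit
  set z : ℕ → (ℕ → Bool) := fun n k => xor (xor (x (n + k) 0) (C (n + k))) (C n) with hz
  -- key invariant
  have inv : ∀ i, i ≤ N → ∀ n, xor (x n i) (C n) = xor (x (n + i) 0) (C (n + i)) := by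
    intro i
    induction i with
    | zero => intro _ n; rfl
    | succ i ih =>
      intro hiN n
      have h1 : x (n + 1) i = xor (x n (i + 1)) (c n) := hc n i (le_trans (Nat.le_succ i) hiN)
      have h2 : x n (i + 1) = xor (x (n + 1) i) (c n) := by
        rw [h1, Bool.xor_assoc, Bool.xor_self, Bool.xor_false]
      have h3 := ih (le_trans (Nat.le_succ i) hiN) (n + 1)
      calc xor (x n (i + 1)) (C n) = xor (x (n + 1) i) (xor (c n) (C n)) := by
            rw [h2, Bool.xor_assoc]
        _ = xor (x (n + 1) i) (C (n + 1)) := by rw [hC, Bool.xor_comm (C n) (c n)]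
        _ = xor (x (n + 1 + i) 0) (C (n + 1 + i)) := h3
        _ = xor (x (n + (i + 1)) 0) (C (n + (i + 1))) := by ring_nf
  have agree : ∀ n, ∀ i ≤ N, z n i = x n i := by
    intro n i hi
    have h := inv i hi n
    show ((x (n + i) 0 ^^ C (n + i)) ^^ C n) = x n i
    rw [← h, Bool.xor_assoc, Bool.xor_self, Bool.xor_false]
  refine ⟨z, ?_, ?_⟩
  · intro n
    have e1 : ∀ k : ℕ, n + 1 + k = n + k + 1 := fun k => by omega
    cases hcn : c n with
    | false =>
      refine Set.mem_insert_iff.2 (Or.inl ?_)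
      funext k
      show ((x (n + 1 + k) 0 ^^ C (n + 1 + k)) ^^ C (n + 1)) =
        ((x (n + k + 1) 0 ^^ C (n + k + 1)) ^^ C n)
      rw [e1 k, show C (n + 1) = (C n ^^ c n) from hC n, hcn, Bool.xor_false]
    | true =>
      refine Set.mem_insert_iff.2 (Or.inr (Set.mem_singleton_iff.2 ?_))
      funext k
      show ((x (n + 1 + k) 0 ^^ C (n + 1 + k)) ^^ C (n + 1)) =
        !((x (n + k + 1) 0 ^^ C (n + k + 1)) ^^ C n)
      rw [e1 k, show C (n + 1) = (C n ^^ c n) from hC n, hcn]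
      cases x (n + k + 1) 0 <;> cases C (n + k + 1) <;> cases C n <;> rfl
  · intro n
    have hcyl : z n ∈ PiNat.cylinder (x n) (N + 1) := by
      intro i hi
      exact agree n i (Nat.lt_succ_iff.1 hi)
    have hle : dist (z n) (x n) ≤ (1 / 2 : ℝ) ^ (N + 1) :=
      PiNat.mem_cylinder_iff_dist_le.1 hcyl
    calc dist (z n) (x n) ≤ (1 / 2 : ℝ) ^ (N + 1) := hle
      _ ≤ (1 / 2 : ℝ) ^ N := by
          apply pow_le_pow_of_le_one (by norm_num) (by norm_num) (Nat.le_succ N)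
      _ < ε := hN
end

section
/- Theorem A: Let X be a compact metric space and let F : X → Set X be a positively expansive set-valued map (with nonempty values). If F has the shadowing property, then F has the periodic shadowing property. -/
/-- Positively expansive set-valued map. -/
def SVPositivelyExpansive {X : Type*} [MetricSpace X] (F : X → Set X) : Prop :=
  ∃ α > (0 : ℝ), ∀ x y : ℕ → X, IsOrbit F x → IsOrbit F y → x 0 ≠ y 0 →
    ∃ n, dist (x n) (y n) > α

/-- Theorem A. -/
theorem stmt3 {X : Type*} [MetricSpace X] [CompactSpace X] (F : X → Set X)
    (hne : ∀ x, (F x).Nonempty)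
    (hexp : SVPositivelyExpansive F)
    (hSP : SVShadowing F) :
    SVPeriodicShadowing F := by
  obtain ⟨α, hα, hE⟩ := hexp
  intro ε hε
  obtain ⟨δ, hδ, hS⟩ := hSP (min ε (α / 2)) (lt_min hε (by linarith))
  refine ⟨δ, hδ, ?_⟩
  rintro x hx ⟨k, hk1, hk⟩
  obtain ⟨z, hz, hzx⟩ := hS x hx
  have key : ∀ m, z (m + k) = z m := by
    intro m
    by_contra hne'
    obtain ⟨n, hn⟩ := hE (fun n => z (n + (m + k))) (fun n => z (n + m))
      (fun n => by
        have h := hz (n + (m + k))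
        rwa [show n + (m + k) + 1 = n + 1 + (m + k) from by omega] at h)
      (fun n => by
        have h := hz (n + m)
        rwa [show n + m + 1 = n + 1 + m from by omega] at h)
      (by simpa using hne')
    have hn2 : dist (z (n + (m + k))) (z (n + m)) > α := hn
    have h1 : dist (z (n + (m + k))) (x (n + (m + k))) < min ε (α / 2) := hzx _
    have h2 : dist (z (n + m)) (x (n + m)) < min ε (α / 2) := hzx _
    have hxeq : x (n + (m + k)) = x (n + m) := by
      have := hk (n + m); rwa [Nat.add_assoc] at this
    have htri : dist (z (n + (m + k))) (z (n + m)) ≤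
        dist (z (n + (m + k))) (x (n + (m + k))) + dist (z (n + m)) (x (n + m)) := by
      rw [hxeq]
      simpa [dist_comm] using dist_triangle (z (n + (m + k))) (x (n + m)) (z (n + m))
    have hmin : min ε (α / 2) ≤ α / 2 := min_le_right _ _
    linarith
  exact ⟨z, hz, ⟨k, hk1, key⟩, fun n => lt_of_lt_of_le (hzx n) (min_le_left _ _)⟩
end

section
/- Theorem B (transitivity part): Let (X,d) be a metric space and let F : X → Set X be a chain transitive set-valued map (with nonempty values). If F has the periodic shadowing property, then F is topologically transitive. -/
/-- `F` is chain transitive: for every `δ > 0` and all `x, y` there is a `δ`-chain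
from `x` to `y` (of some length `n ≥ 1`). -/
def SVChainTransitive {X : Type*} [MetricSpace X] (F : X → Set X) : Prop :=
  ∀ δ > (0 : ℝ), ∀ x y : X, ∃ n : ℕ, 1 ≤ n ∧ ∃ c : ℕ → X,
    c 0 = x ∧ c n = y ∧ ∀ i < n, Metric.infDist (c (i + 1)) (F (c i)) < δ

/-- `F` is topologically transitive: for all nonempty open `U, V` there is an orbit
starting in `U` that meets `V`. -/
def SVTopologicallyTransitive {X : Type*} [MetricSpace X] (F : X → Set X) : Prop :=
  ∀ U V : Set X, IsOpen U → IsOpen V → U.Nonempty → V.Nonempty →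
    ∃ x : ℕ → X, IsOrbit F x ∧ x 0 ∈ U ∧ ∃ n : ℕ, x n ∈ V

/-- Theorem B (transitivity part). -/
theorem stmt7 {X : Type*} [MetricSpace X] (F : X → Set X)
    (hne : ∀ x, (F x).Nonempty)
    (hct : SVChainTransitive F)
    (hPeSP : SVPeriodicShadowing F) :
    SVTopologicallyTransitive F := by
  rintro U V hU hV ⟨u, hu⟩ ⟨v, hv⟩
  obtain ⟨ε, hε, hballU⟩ := Metric.isOpen_iff.mp hU u hu
  obtain ⟨ε', hε', hballV⟩ := Metric.isOpen_iff.mp hV v hv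
  have hε0 : (0 : ℝ) < min ε ε' := lt_min hε hε'
  obtain ⟨δ, hδ, hshadow⟩ := hPeSP (min ε ε') hε0
  obtain ⟨n, hn, c1, hc10, hc1n, hc1⟩ := hct δ hδ u v
  obtain ⟨m, hm, c2, hc20, hc2m, hc2⟩ := hct δ hδ v u
  set p := n + m with hp
  have hp0 : 0 < p := by omega
  set x : ℕ → X := fun k => if k % p ≤ n then c1 (k % p) else c2 (k % p - n) with hxdef
  have hx1 : ∀ k, k % p ≤ n → x k = c1 (k % p) := by
    intro k hk; simp [hxdef, hk]
  have hx2 : ∀ k, n ≤ k % p → x k = c2 (k % p - n) := by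
    intro k hk
    by_cases h : k % p ≤ n
    · have : k % p = n := le_antisymm h hk
      simp [hxdef, this, hc1n, hc20.symm]
    · simp [hxdef, h]
  have hx0 : x 0 = u := by
    have h0 : (0 : ℕ) % p = 0 := Nat.zero_mod p
    rw [hx1 0 (by omega), h0, hc10]
  have hxn : x n = v := by
    have hnp : n % p = n := Nat.mod_eq_of_lt (by omega)
    rw [hx1 n (by omega), hnp, hc1n]
  have hper : IsPeriodicSeq x := by
    refine ⟨p, hp0, fun k => ?_⟩
    simp [hxdef, Nat.add_mod_right]
  have hpseudo : IsPseudoOrbit F δ x := by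
    intro k
    have hr : k % p < p := Nat.mod_lt _ hp0
    have hmod : (k + 1) % p = (k % p + 1) % p := by
      conv_lhs => rw [← Nat.mod_add_mod]
    by_cases hlast : k % p + 1 = p
    · -- wrap-around
      have hksucc : (k + 1) % p = 0 := by rw [hmod, hlast, Nat.mod_self]
      have hxk1 : x (k + 1) = c2 m := by
        rw [hx1 (k + 1) (by omega), hksucc, hc10, ← hc2m]
      have hkn : n ≤ k % p := by omega
      have hxk : x k = c2 (k % p - n) := hx2 k hkn
      have hlt : k % p - n < m := by omega
      have h := hc2 (k % p - n) hlt
      have heq : k % p - n + 1 = m := by omega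
      rw [heq] at h
      rw [hxk1, hxk]; exact h
    · have hksucc : (k + 1) % p = k % p + 1 := by
        rw [hmod]; exact Nat.mod_eq_of_lt (by omega)
      by_cases hcase : k % p < n
      · have hxk : x k = c1 (k % p) := hx1 k (le_of_lt hcase)
        have hxk1 : x (k + 1) = c1 (k % p + 1) := by
          rw [hx1 (k + 1) (by omega), hksucc]
        rw [hxk, hxk1]; exact hc1 _ hcase
      · have hkn : n ≤ k % p := le_of_not_gt hcase
        have hxk : x k = c2 (k % p - n) := hx2 k hkn
        have hxk1 : x (k + 1) = c2 (k % p - n + 1) := by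
          rw [hx2 (k + 1) (by omega), hksucc]
          congr 1; omega
        rw [hxk, hxk1]
        exact hc2 _ (by omega)
  obtain ⟨z, hzorb, hzper, hzclose⟩ := hshadow x hpseudo hper
  refine ⟨z, hzorb, ?_, n, ?_⟩
  · apply hballU
    have := hzclose 0
    rw [hx0] at this
    exact Metric.mem_ball.mpr (lt_of_lt_of_le this (min_le_left _ _))
  · apply hballV
    have := hzclose n
    rw [hxn] at this
    exact Metric.mem_ball.mpr (lt_of_lt_of_le this (min_le_right _ _))
end

section
/- Let (X,d) be a metric space and let F : X → Set X be a set-valued map with nonempty compact values such that: (1) F is onto, i.e., for every y ∈ X there exists x ∈ X with y ∈ F(x); (2) F is continuous with respect to the Hausdorff metric, i.e., for every x ∈ X and ε > 0 there exists δ > 0 such that d(x,y) < δ implies the Hausdorff distance between F(x) and F(y) is less than ε; (3) F has the periodic shadowing property. Then the inverse set-valued map F⁻¹, defined by F⁻¹(y) = {x ∈ X : y ∈ F(x)}, also has the periodic shadowing property. -/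
/-- The inverse of a set-valued map: `F⁻¹(y) = {x : y ∈ F(x)}`. -/
def SVInverse {X : Type*} (F : X → Set X) : X → Set X :=
  fun y => {x | y ∈ F x}

private lemma per_mod' {X : Type*} {x : ℕ → X} {k : ℕ} (hk : 1 ≤ k)
    (hp : ∀ n, x (n + k) = x n) : ∀ a, x a = x (a % k) := by
  intro a
  induction a using Nat.strong_induction_on with
  | _ a ih =>
    rcases lt_or_ge a k with h | h
    · rw [Nat.mod_eq_of_lt h]
    · have h1 : a = (a - k) + k := by omega
      conv_lhs => rw [h1]
      rw [hp, ih (a - k) (by omega), ← Nat.mod_eq_sub_mod h]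

private lemma per_of_mod_eq {X : Type*} {x : ℕ → X} {k : ℕ} (hk : 1 ≤ k)
    (hp : ∀ n, x (n + k) = x n) {a b : ℕ} (h : a % k = b % k) : x a = x b := by
  rw [per_mod' hk hp a, per_mod' hk hp b, h]

private lemma per_mul' {X : Type*} {z : ℕ → X} {p : ℕ}
    (h : ∀ n, z (n + p) = z n) : ∀ t n, z (n + p * t) = z n := by
  intro t
  induction t with
  | zero => simp
  | succ t ih =>
    intro n
    have : n + p * (t + 1) = (n + p * t) + p := by ring
    rw [this, h, ih]

private lemma succ_mod_cases {L n : ℕ} (hL : 1 ≤ L) :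
    (n % L + 1 < L ∧ (n + 1) % L = n % L + 1) ∨ (n % L = L - 1 ∧ (n + 1) % L = 0) := by
  have he : (n % L + 1) % L = (n + 1) % L := (Nat.mod_modEq n L).add_right 1
  have hlt : n % L < L := Nat.mod_lt _ hL
  rcases lt_or_ge (n % L + 1) L with h | h
  · left
    exact ⟨h, by rw [← he, Nat.mod_eq_of_lt h]⟩
  · right
    have hle : n % L + 1 = L := by omega
    constructor
    · omega
    · rw [← he, hle, Nat.mod_self]

private lemma keyE {k p n : ℕ} (hk : 1 ≤ k) (hp : 1 ≤ p) :
    (k - 1 - (k * p - n % (k * p)) % k + 1) % k = n % k := by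
  set L := k * p with hLdef
  have hL : 1 ≤ L := Nat.one_le_iff_ne_zero.mpr (by positivity)
  set r := n % L with hrdef
  set s := (L - r) % k with hsdef
  have hsk : s < k := Nat.mod_lt _ hk
  have hrL : r ≤ L := le_of_lt (Nat.mod_lt _ hL)
  have hL0 : L % k = 0 := Nat.mul_mod_right k p
  have h0 : (s + r) % k = 0 % k := by
    have h1 : (s + r) % k = ((L - r) + r) % k :=
      Nat.ModEq.add_right r (Nat.mod_modEq (L - r) k)
    rw [h1, Nat.sub_add_cancel hrL, hL0, Nat.zero_mod]
  have h2 : (s + (k - s)) % k = (s + r) % k := by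
    rw [Nat.add_sub_cancel' hsk.le, h0, Nat.mod_self, Nat.zero_mod]
  have h3 : (k - s) % k = r % k := Nat.ModEq.add_left_cancel' s h2
  have h4 : k - 1 - s + 1 = k - s := by omega
  rw [h4, h3, hrdef, Nat.mod_mod_of_dvd n ⟨p, rfl⟩]

/-- If `F` has nonempty compact values, is onto, is continuous with respect to the
Hausdorff metric, and has PeSP, then `F⁻¹` has PeSP. -/
theorem stmt10 {X : Type*} [MetricSpace X] (F : X → Set X)
    (hne : ∀ x, (F x).Nonempty)
    (hcpt : ∀ x, IsCompact (F x))
    (honto : ∀ y : X, ∃ x : X, y ∈ F x)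
    (hcont : ∀ x : X, ∀ ε > (0 : ℝ), ∃ δ > (0 : ℝ), ∀ y : X, dist x y < δ →
      Metric.hausdorffDist (F x) (F y) < ε)
    (hPeSP : SVPeriodicShadowing F) :
    SVPeriodicShadowing (SVInverse F) := by
  intro ε hε
  obtain ⟨δ, hδ, hshad⟩ := hPeSP (ε / 2) (by linarith)
  refine ⟨min δ (ε / 2), by positivity, ?_⟩
  intro x hx hper
  obtain ⟨k, hk, hxk⟩ := hper
  -- choose witnesses w n ∈ F⁻¹(x n) close to x (n+1)
  have hw : ∀ n, ∃ w, x n ∈ F w ∧ dist (x (n + 1)) w < min δ (ε / 2) := by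
    intro n
    have hne' : (SVInverse F (x n)).Nonempty := by
      obtain ⟨a, ha⟩ := honto (x n)
      exact ⟨a, ha⟩
    have h := hx n
    rw [Metric.infDist_lt_iff hne'] at h
    obtain ⟨w, hw1, hw2⟩ := h
    exact ⟨w, hw1, hw2⟩
  choose w hwF hwd using hw
  -- the reversed pseudo-orbit for F
  set idx : ℕ → ℕ := fun j => k - 1 - j % k with hidx
  set u : ℕ → X := fun j => w (idx j) with hu
  have hidx_succ : ∀ j, (idx (j + 1) + 1) % k = idx j % k := by
    intro j
    rcases succ_mod_cases (L := k) (n := j) hk with ⟨h1, h2⟩ | ⟨h1, h2⟩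
    · simp only [hidx, h2]
      congr 1
      omega
    · simp only [hidx, h1, h2]
      have e1 : k - 1 - 0 + 1 = k := by omega
      have e2 : k - 1 - (k - 1) = 0 := by omega
      rw [e1, e2, Nat.mod_self, Nat.zero_mod]
  have hupo : IsPseudoOrbit F δ u := by
    intro j
    have hmem : x (idx j) ∈ F (u j) := hwF _
    have h1 : x (idx (j + 1) + 1) = x (idx j) := per_of_mod_eq hk hxk (hidx_succ j)
    calc Metric.infDist (u (j + 1)) (F (u j)) ≤ dist (u (j + 1)) (x (idx j)) :=
          Metric.infDist_le_dist_of_mem hmem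
      _ = dist (x (idx (j + 1) + 1)) (w (idx (j + 1))) := by rw [h1, dist_comm]
      _ < min δ (ε / 2) := hwd _
      _ ≤ δ := min_le_left _ _
  have huper : IsPeriodicSeq u := by
    refine ⟨k, hk, fun n => ?_⟩
    simp only [hu, hidx, Nat.add_mod_right]
  obtain ⟨z, hzo, ⟨p, hp1, hzp⟩, hzd⟩ := hshad u hupo huper
  -- the reversed shadowing orbit for F⁻¹
  set L : ℕ := k * p with hLdef
  have hL : 1 ≤ L := Nat.one_le_iff_ne_zero.mpr (by positivity)
  have hzL : ∀ j, z (j + L) = z j := by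
    intro j
    have : L = p * k := by rw [hLdef, Nat.mul_comm]
    rw [this]
    exact per_mul' hzp k j
  set J : ℕ → ℕ := fun n => L - n % L with hJ
  refine ⟨fun n => z (J n), ?_, ⟨L, hL, ?_⟩, ?_⟩
  · -- orbit of SVInverse F
    intro n
    show z (J n) ∈ F (z (J (n + 1)))
    rcases succ_mod_cases (L := L) (n := n) hL with ⟨h1, h2⟩ | ⟨h1, h2⟩
    · have e1 : J n = (J (n + 1)) + 1 := by simp only [hJ, h2]; omega
      rw [e1]
      exact hzo _
    · have e1 : J n = 1 := by simp only [hJ, h1]; omega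
      have e2 : J (n + 1) = L := by simp only [hJ, h2]; omega
      rw [e1, e2]
      have : z (1 + L) = z 1 := hzL 1
      rw [← this]
      have e3 : 1 + L = L + 1 := by omega
      rw [e3]
      exact hzo L
  · -- periodicity with period L
    intro n
    have : J (n + L) = J n := by simp only [hJ, Nat.add_mod_right]
    show z (J (n + L)) = z (J n)
    rw [this]
  · -- shadowing
    intro n
    have h1 : dist (z (J n)) (u (J n)) < ε / 2 := hzd (J n)
    have h2 : dist (x (idx (J n) + 1)) (w (idx (J n))) < min δ (ε / 2) := hwd _
    have h3 : x (idx (J n) + 1) = x n := by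
      refine per_of_mod_eq hk hxk ?_
      simpa only [hidx, hJ, hLdef] using keyE (k := k) (p := p) (n := n) hk hp1
    have h4 : dist (u (J n)) (x n) < ε / 2 := by
      have : dist (u (J n)) (x n) = dist (x (idx (J n) + 1)) (w (idx (J n))) := by
        rw [h3.symm, dist_comm]
      rw [this]
      exact lt_of_lt_of_le h2 (min_le_right _ _)
    calc dist (z (J n)) (x n) ≤ dist (z (J n)) (u (J n)) + dist (u (J n)) (x n) :=
          dist_triangle _ _ _
      _ < ε / 2 + ε / 2 := by linarith
      _ = ε := by ring
end

section
/- Let (X,d) be a metric space and let F : X → Set X be a set-valued map with nonempty values having the periodic shadowing property. Then for every integer n ≥ 1 the iterated set-valued map Fⁿ, defined inductively by F¹ = F and F^{k+1}(x) = ⋃_{y ∈ F^k(x)} F(y), also has the periodic shadowing property. -/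
/-- The `n`-th iterate of a set-valued map: `F⁰(x) = {x}`,
`F^{k+1}(x) = ⋃_{y ∈ F^k(x)} F(y)`; in particular `F¹ = F` (as sets). -/
def SVIter {X : Type*} (F : X → Set X) : ℕ → X → Set X
  | 0, x => {x}
  | k + 1, x => ⋃ y ∈ SVIter F k x, F y

lemma svIter_mem_iff {X : Type*} (F : X → Set X) :
    ∀ (n : ℕ) (x w : X), w ∈ SVIter F n x ↔
      ∃ c : ℕ → X, c 0 = x ∧ c n = w ∧ ∀ i < n, c (i + 1) ∈ F (c i) := by
  intro n
  induction n with
  | zero =>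
    intro x w
    simp only [SVIter, Set.mem_singleton_iff]
    constructor
    · intro h; exact ⟨fun _ => w, h, rfl, by omega⟩
    · rintro ⟨c, h0, hn, _⟩; rw [← hn, h0]
  | succ k ih =>
    intro x w
    simp only [SVIter, Set.mem_iUnion, exists_prop]
    constructor
    · rintro ⟨y, hy, hw⟩
      obtain ⟨c, h0, hk, hs⟩ := (ih x y).1 hy
      refine ⟨fun i => if i = k + 1 then w else c i, ?_, by simp, ?_⟩
      · simp [h0]
      · intro i hi
        show (if i + 1 = k + 1 then w else c (i + 1)) ∈ F (if i = k + 1 then w else c i)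
        rw [if_neg (show i ≠ k + 1 by omega)]
        by_cases he : i = k
        · rw [if_pos (by omega), he, hk]; exact hw
        · rw [if_neg (by omega)]; exact hs i (by omega)
    · rintro ⟨c, h0, hk1, hs⟩
      refine ⟨c k, (ih x (c k)).2 ⟨c, h0, rfl, fun i hi => hs i (by omega)⟩, ?_⟩
      rw [← hk1]; exact hs k (by omega)

lemma orbit_iter {X : Type*} (F : X → Set X) (z : ℕ → X) (hz : IsOrbit F z) :
    ∀ (n a : ℕ), z (a + n) ∈ SVIter F n (z a) := by
  intro n
  induction n with
  | zero => intro a; simp [SVIter]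
  | succ k ih =>
    intro a
    simp only [SVIter, Set.mem_iUnion, exists_prop]
    exact ⟨z (a + k), ih a, by simpa [← Nat.add_assoc] using hz (a + k)⟩

lemma svIter_nonempty {X : Type*} (F : X → Set X) (hne : ∀ x, (F x).Nonempty) :
    ∀ (n : ℕ) (x : X), (SVIter F n x).Nonempty := by
  intro n
  induction n with
  | zero => intro x; exact ⟨x, rfl⟩
  | succ k ih =>
    intro x
    obtain ⟨y, hy⟩ := ih x
    obtain ⟨w, hw⟩ := hne y
    exact ⟨w, by simp only [SVIter, Set.mem_iUnion, exists_prop]; exact ⟨y, hy, hw⟩⟩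

lemma periodic_mul {X : Type*} (x : ℕ → X) (p : ℕ) (hp : ∀ m, x (m + p) = x m) :
    ∀ (q a : ℕ), x (a + q * p) = x a := by
  intro q
  induction q with
  | zero => simp
  | succ t ih =>
    intro a
    have h : a + (t + 1) * p = (a + t * p) + p := by ring
    rw [h, hp, ih]

lemma periodic_mod {X : Type*} (x : ℕ → X) (k : ℕ) (hk : 1 ≤ k)
    (hp : ∀ m, x (m + k) = x m) : ∀ a, x (a % k) = x a := by
  intro a
  conv_rhs => rw [← Nat.mod_add_div' a k]
  rw [periodic_mul x k hp]

/-- If `F` has PeSP, then every iterate `Fⁿ` (`n ≥ 1`) has PeSP. -/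
theorem stmt11 {X : Type*} [MetricSpace X] (F : X → Set X)
    (hne : ∀ x, (F x).Nonempty)
    (hPeSP : SVPeriodicShadowing F) :
    ∀ n : ℕ, 1 ≤ n → SVPeriodicShadowing (SVIter F n) := by
  intro n hn ε hε
  obtain ⟨δ, hδ, hF⟩ := hPeSP ε hε
  refine ⟨δ, hδ, ?_⟩
  intro x hx hper
  obtain ⟨k, hk, hxk⟩ := hper
  have hn0 : 0 < n := hn
  -- choose chains realizing each pseudo-orbit jump
  have hchain : ∀ m : ℕ, ∃ c : ℕ → X, c 0 = x m ∧ (∀ i < n, c (i + 1) ∈ F (c i)) ∧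
      dist (x (m + 1)) (c n) < δ := by
    intro m
    have h := hx m
    rw [Metric.infDist_lt_iff (svIter_nonempty F hne n (x m))] at h
    obtain ⟨w, hw, hdw⟩ := h
    obtain ⟨c, h0, hcn, hs⟩ := (svIter_mem_iff F n (x m) w).1 hw
    exact ⟨c, h0, hs, by rwa [hcn]⟩
  choose c hc0 hcs hcd using hchain
  set u : ℕ → X := fun j => c (j / n % k) (j % n) with hu
  have hu0 : ∀ m : ℕ, u (m * n) = x m := by
    intro m
    have h1 : m * n / n = m := Nat.mul_div_cancel m hn0
    have h2 : m * n % n = 0 := Nat.mul_mod_left m n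
    simp only [hu, h1, h2, hc0]
    exact periodic_mod x k hk hxk m
  -- u is a δ-pseudo-orbit of F
  have hupo : IsPseudoOrbit F δ u := by
    intro j
    set q := j / n with hq
    set r := j % n with hr
    have hjr : r < n := Nat.mod_lt j hn0
    have hj : j = r + q * n := by rw [hq, hr]; exact (Nat.mod_add_div' j n).symm
    rcases Nat.lt_or_ge (r + 1) n with h | h
    · -- interior step
      have hd : (j + 1) / n = q := by
        rw [hj, (by ring : r + q * n + 1 = (r + 1) + q * n),
          Nat.add_mul_div_right _ _ hn0, Nat.div_eq_of_lt h, Nat.zero_add]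
      have hm : (j + 1) % n = r + 1 := by
        rw [hj, (by ring : r + q * n + 1 = (r + 1) + q * n),
          Nat.add_mul_mod_self_right, Nat.mod_eq_of_lt h]
      have hmem : u (j + 1) ∈ F (u j) := by
        simp only [hu, hd, hm, ← hq, ← hr]
        exact hcs (q % k) r (by omega)
      rw [Metric.infDist_zero_of_mem hmem]
      exact hδ
    · -- boundary step
      have hrn : r + 1 = n := by omega
      have hd : (j + 1) / n = q + 1 := by
        rw [hj, (by rw [← hrn]; ring : r + q * n + 1 = (q + 1) * n),
          Nat.mul_div_cancel _ hn0]
      have hm : (j + 1) % n = 0 := by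
        rw [hj, (by rw [← hrn]; ring : r + q * n + 1 = (q + 1) * n)]
        exact Nat.mul_mod_left _ _
      have hu1 : u (j + 1) = x (q % k + 1) := by
        simp only [hu, hd, hm, hc0]
        rw [periodic_mod x k hk hxk]
        conv_lhs => rw [← Nat.mod_add_div' q k]
        rw [Nat.add_right_comm, periodic_mul x k hxk]
      have hmem : c (q % k) n ∈ F (u j) := by
        simp only [hu, ← hq, ← hr]
        have := hcs (q % k) r (by omega)
        rwa [hrn] at this
      calc Metric.infDist (u (j + 1)) (F (u j)) ≤ dist (u (j + 1)) (c (q % k) n) :=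
            Metric.infDist_le_dist_of_mem hmem
        _ < δ := by rw [hu1]; exact hcd (q % k)
  -- u is periodic with period n * k
  have huper : IsPeriodicSeq u := by
    refine ⟨n * k, Nat.one_le_iff_ne_zero.2 (by positivity), ?_⟩
    intro j
    have h1 : (j + n * k) / n = j / n + k := by
      rw [(by ring : j + n * k = j + k * n), Nat.add_mul_div_right _ _ hn0]
    have h2 : (j + n * k) % n = j % n := by
      rw [(by ring : j + n * k = j + k * n), Nat.add_mul_mod_self_right]
    simp only [hu, h1, h2, Nat.add_mod_right]
  obtain ⟨z, hz, ⟨p, hp1, hpz⟩, hdz⟩ := hF u hupo huper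
  refine ⟨fun m => z (m * n), ?_, ⟨p, hp1, ?_⟩, ?_⟩
  · intro m
    show z ((m + 1) * n) ∈ SVIter F n (z (m * n))
    have := orbit_iter F z hz n (m * n)
    rwa [(by ring : (m + 1) * n = m * n + n)]
  · intro m
    show z ((m + p) * n) = z (m * n)
    rw [(by ring : (m + p) * n = m * n + n * p)]
    exact periodic_mul z p hpz n (m * n)
  · intro m
    have := hdz (m * n)
    rwa [hu0 m] at this
end

section
/- Let (X, d_X) and (Y, d_Y) be metric spaces and let F : X → Set X and G : Y → Set Y be set-valued maps (with nonempty values). If F and G both have the periodic shadowing property, then the product map F × G : X × Y → Set (X × Y), defined by (F × G)(x,y) = F(x) × G(y), has the periodic shadowing property with respect to the metric d̂((x₁,y₁),(x₂,y₂)) = max{d_X(x₁,x₂), d_Y(y₁,y₂)} on X × Y. -/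
/-! The coordinate projections are `1`-Lipschitz and, the values of `F` and `G` being nonempty,
map `F x ×ˢ G y` onto `F x` and `G y`; so a periodic pseudo-orbit of the product projects to
periodic pseudo-orbits of `F` and `G`. Shadowing these separately and pairing the two periodic
orbits (a common period being the product of their periods) gives the shadowing orbit of the
product, since for the sup metric `ε`-closeness is checked coordinatewise. -/

open Metric Set

lemma LipschitzWith.infDist_image_le {α β : Type*} [PseudoMetricSpace α] [PseudoMetricSpace β]
    {f : α → β} (hf : LipschitzWith 1 f) (x : α) (s : Set α) :
    infDist (f x) (f '' s) ≤ infDist x s := by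
  rcases s.eq_empty_or_nonempty with rfl | hs
  · simp
  refine (le_infDist hs).2 fun y hy => ?_
  calc infDist (f x) (f '' s) ≤ dist (f x) (f y) := infDist_le_dist_of_mem (mem_image_of_mem f hy)
    _ ≤ dist x y := by simpa using hf.dist_le_mul x y

lemma IsPseudoOrbit.mono {X : Type*} [MetricSpace X] {F : X → Set X} {δ δ' : ℝ} {x : ℕ → X}
    (hx : IsPseudoOrbit F δ x) (hδ : δ ≤ δ') : IsPseudoOrbit F δ' x :=
  fun n => (hx n).trans_le hδ

lemma IsPseudoOrbit.map {X Y : Type*} [MetricSpace X] [MetricSpace Y]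
    {H : X → Set X} {F : Y → Set Y} {f : X → Y} (hf : LipschitzWith 1 f)
    (hfactor : ∀ p, f '' H p = F (f p)) {δ : ℝ} {x : ℕ → X} (hx : IsPseudoOrbit H δ x) :
    IsPseudoOrbit F δ (f ∘ x) := fun n =>
  calc infDist (f (x (n + 1))) (F (f (x n)))
      = infDist (f (x (n + 1))) (f '' H (x n)) := by rw [hfactor]
    _ ≤ infDist (x (n + 1)) (H (x n)) := hf.infDist_image_le _ _
    _ < δ := hx n

lemma IsPeriodicSeq.comp {X Y : Type*} {x : ℕ → X} (hx : IsPeriodicSeq x) (f : X → Y) :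
    IsPeriodicSeq (f ∘ x) :=
  let ⟨k, hk, hper⟩ := hx
  ⟨k, hk, fun n => congrArg f (hper n)⟩

lemma IsPeriodicSeq.prodMk {X Y : Type*} {x : ℕ → X} {y : ℕ → Y}
    (hx : IsPeriodicSeq x) (hy : IsPeriodicSeq y) : IsPeriodicSeq fun n => (x n, y n) := by
  obtain ⟨a, ha, hxa : Function.Periodic x a⟩ := hx
  obtain ⟨b, hb, hyb : Function.Periodic y b⟩ := hy
  have hxab : Function.Periodic x (a * b) := by
    simpa [mul_comm] using hxa.nat_mul b
  have hyab : Function.Periodic y (a * b) := by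
    simpa using hyb.nat_mul a
  exact ⟨a * b, Nat.mul_pos ha hb, fun n => Prod.ext (hxab n) (hyab n)⟩

/-- If `F` and `G` have PeSP, then so does the product map
`(F × G)(x,y) = F(x) × G(y)` on `X × Y` with the sup metric
(this is exactly the Mathlib `Prod` metric: `dist p q = max (dist p.1 q.1) (dist p.2 q.2)`). -/
theorem stmt12 {X Y : Type*} [MetricSpace X] [MetricSpace Y]
    (F : X → Set X) (G : Y → Set Y)
    (hFne : ∀ x, (F x).Nonempty) (hGne : ∀ y, (G y).Nonempty)
    (hF : SVPeriodicShadowing F) (hG : SVPeriodicShadowing G) :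
    SVPeriodicShadowing (fun p : X × Y => F p.1 ×ˢ G p.2) := by
  intro ε hε
  obtain ⟨δ₁, hδ₁, shadowF⟩ := hF ε hε
  obtain ⟨δ₂, hδ₂, shadowG⟩ := hG ε hε
  refine ⟨min δ₁ δ₂, lt_min hδ₁ hδ₂, fun x hx hper => ?_⟩
  have hx₁ : IsPseudoOrbit F δ₁ (Prod.fst ∘ x) :=
    (hx.map LipschitzWith.prod_fst fun p => fst_image_prod (F p.1) (hGne p.2)).mono
      (min_le_left _ _)
  have hx₂ : IsPseudoOrbit G δ₂ (Prod.snd ∘ x) :=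
    (hx.map LipschitzWith.prod_snd fun p => snd_image_prod (hFne p.1) (G p.2)).mono
      (min_le_right _ _)
  obtain ⟨z, hz, hzper, hzx⟩ := shadowF _ hx₁ (hper.comp _)
  obtain ⟨w, hw, hwper, hwx⟩ := shadowG _ hx₂ (hper.comp _)
  exact ⟨fun n => (z n, w n), fun n => ⟨hz n, hw n⟩, hzper.prodMk hwper,
    fun n => Prod.dist_eq.trans_lt (max_lt (hzx n) (hwx n))⟩
end

section
/- Let X be a compact metric space and let f : X → X be an expansive homeomorphism (there exists c > 0 such that for all distinct x, y ∈ X there is n ∈ ℤ with d(fⁿ(x), fⁿ(y)) > c). If f has the shadowing property (for every ε > 0 there exists δ > 0 such that every bi-infinite sequence (x_n)_{n∈ℤ} with d(f(x_n), x_{n+1}) < δ for all n ∈ ℤ satisfies d(fⁿ(z), x_n) < ε for all n ∈ ℤ, for some z ∈ X), then f has the periodic shadowing property: for every ε > 0 there exists δ > 0 such that every periodic bi-infinite δ-pseudo-orbit (x_n)_{n∈ℤ} (i.e., x_{n+k} = x_n for all n ∈ ℤ, for some k ≥ 1) is ε-shadowed by the orbit of a periodic point p of f: d(fⁿ(p),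 x_n) < ε for all n ∈ ℤ. -/
/-- Let `X` be a compact metric space and `f : X ≃ₜ X` an expansive homeomorphism with the
(bi-infinite) shadowing property. Then `f` has the periodic shadowing property.
Here `fⁿ` for `n : ℤ` is realized via the group of permutations `Equiv.Perm X`. -/
theorem stmt13 {X : Type*} [MetricSpace X] [CompactSpace X] (f : X ≃ₜ X)
    (hexp : ∃ c > (0 : ℝ), ∀ x y : X, x ≠ y →
      ∃ n : ℤ, dist (((f.toEquiv : Equiv.Perm X) ^ n) x) (((f.toEquiv : Equiv.Perm X) ^ n) y) > c)
    (hSP : ∀ ε > (0 : ℝ), ∃ δ > (0 : ℝ), ∀ x : ℤ → X,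
      (∀ n : ℤ, dist (f (x n)) (x (n + 1)) < δ) →
      ∃ z : X, ∀ n : ℤ, dist (((f.toEquiv : Equiv.Perm X) ^ n) z) (x n) < ε) :
    ∀ ε > (0 : ℝ), ∃ δ > (0 : ℝ), ∀ x : ℤ → X,
      (∀ n : ℤ, dist (f (x n)) (x (n + 1)) < δ) →
      (∃ k : ℕ, 1 ≤ k ∧ ∀ n : ℤ, x (n + k) = x n) →
      ∃ p : X, (∃ m : ℕ, 1 ≤ m ∧ f^[m] p = p) ∧
        ∀ n : ℤ, dist (((f.toEquiv : Equiv.Perm X) ^ n) p) (x n) < ε := by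
  obtain ⟨c, hc, hexp⟩ := hexp
  intro ε hε
  set g : Equiv.Perm X := (f.toEquiv : Equiv.Perm X) with hg
  set ε0 : ℝ := min ε (c / 2) with hε0
  have hε0pos : 0 < ε0 := lt_min hε (by linarith)
  obtain ⟨δ, hδ, hδSP⟩ := hSP ε0 hε0pos
  refine ⟨δ, hδ, ?_⟩
  rintro x hx ⟨k, hk, hper⟩
  obtain ⟨z, hz⟩ := hδSP x hx
  have key : (g ^ (k : ℤ)) z = z := by
    by_contra hne
    obtain ⟨n, hn⟩ := hexp _ _ hne
    have h1 : dist ((g ^ n) ((g ^ (k : ℤ)) z)) (x n) < ε0 := by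
      have := hz (n + k)
      rw [hper n] at this
      have heq : (g ^ (n + (k : ℤ))) z = (g ^ n) ((g ^ (k : ℤ)) z) := by
        rw [zpow_add]; rfl
      rwa [heq] at this
    have h2 : dist ((g ^ n) z) (x n) < ε0 := hz n
    have := dist_triangle ((g ^ n) ((g ^ (k : ℤ)) z)) (x n) ((g ^ n) z)
    rw [dist_comm (x n)] at this
    have hle : ε0 ≤ c / 2 := min_le_right _ _
    have : dist ((g ^ n) ((g ^ (k : ℤ)) z)) ((g ^ n) z) < c := by linarith
    linarith [hn]
  have hiter : ∀ m : ℕ, (g ^ (m : ℤ)) z = f^[m] z := by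
    intro m
    rw [zpow_natCast]
    induction m with
    | zero => rfl
    | succ m ih =>
      rw [pow_succ', Function.iterate_succ_apply', Equiv.Perm.mul_apply, ih]
      rfl
  refine ⟨z, ⟨k, hk, ?_⟩, fun n => lt_of_lt_of_le (hz n) (min_le_left _ _)⟩
  rw [← hiter k, key]
end

section
/- Let X be a compact metric space and let f : X → X be a continuous chain transitive map. If f has the periodic shadowing property, then f has the shadowing property and is topologically transitive. -/
/-- Let `X` be a compact metric space and `f : X → X` a continuous chain transitive map.
If `f` has the periodic shadowing property, then `f` has the shadowing property and is
topologically transitive. -/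
theorem stmt14 {X : Type*} [MetricSpace X] [CompactSpace X] (f : X → X)
    (hf : Continuous f)
    (hct : ∀ δ > (0 : ℝ), ∀ x y : X, ∃ n : ℕ, 1 ≤ n ∧ ∃ c : ℕ → X,
      c 0 = x ∧ c n = y ∧ ∀ i < n, dist (f (c i)) (c (i + 1)) < δ)
    (hPeSP : ∀ ε > (0 : ℝ), ∃ δ > (0 : ℝ), ∀ x : ℕ → X,
      (∀ n, dist (f (x n)) (x (n + 1)) < δ) →
      (∃ k : ℕ, 1 ≤ k ∧ ∀ n, x (n + k) = x n) →
      ∃ p : X, (∃ m : ℕ, 1 ≤ m ∧ f^[m] p = p) ∧ ∀ n, dist (f^[n] p) (x n) < ε) :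
    (∀ ε > (0 : ℝ), ∃ δ > (0 : ℝ), ∀ x : ℕ → X,
      (∀ n, dist (f (x n)) (x (n + 1)) < δ) →
      ∃ z : X, ∀ n, dist (f^[n] z) (x n) < ε) ∧
    (∀ U V : Set X, IsOpen U → IsOpen V → U.Nonempty → V.Nonempty →
      ∃ n : ℕ, 1 ≤ n ∧ (f^[n] '' U ∩ V).Nonempty) := by
  have shadow : ∀ ε > (0 : ℝ), ∃ δ > (0 : ℝ), ∀ x : ℕ → X,
      (∀ n, dist (f (x n)) (x (n + 1)) < δ) →
      ∃ z : X, ∀ n, dist (f^[n] z) (x n) < ε := by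
    intro ε hε
    obtain ⟨δ, hδ, hPe⟩ := hPeSP (ε / 2) (by linarith)
    refine ⟨δ, hδ, ?_⟩
    intro x hx
    -- For each N, find a point shadowing the pseudo-orbit up to time N
    have key : ∀ N : ℕ, ∃ q : X, ∀ i ≤ N, dist (f^[i] q) (x i) < ε / 2 := by
      intro N
      obtain ⟨n, hn1, c, hc0, hcn, hcd⟩ := hct δ hδ (x N) (x 0)
      set p : ℕ := N + n with hpdef
      have hp1 : 1 ≤ p := by omega
      set pat : ℕ → X := fun j => if j ≤ N then x j else c (j - N) with hpat
      set y : ℕ → X := fun i => pat (i % p) with hy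
      have hpatN : ∀ j, N ≤ j → pat j = c (j - N) := by
        intro j hj
        rcases eq_or_lt_of_le hj with h | h
        · simp only [hpat, ← h, le_refl, if_pos, Nat.sub_self, hc0]
        · simp only [hpat, if_neg (by omega : ¬ j ≤ N)]
      have hpo : ∀ i, dist (f (y i)) (y (i + 1)) < δ := by
        intro i
        set j := i % p with hjdef
        have hj : j < p := Nat.mod_lt _ (by omega)
        have h1 : (i + 1) % p = (j + 1) % p := by
          have hdm := Nat.div_add_mod i p
          have : i + 1 = p * (i / p) + (j + 1) := by omega
          rw [this, Nat.mul_add_mod]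
        have hyi : y i = pat j := rfl
        by_cases hjN : j < N
        · have h2 : (j + 1) % p = j + 1 := Nat.mod_eq_of_lt (by omega)
          have hy1 : y (i + 1) = pat (j + 1) := by
            simp only [hy, h1, h2]
          rw [hyi, hy1]
          simp only [hpat, if_pos (by omega : j ≤ N), if_pos (by omega : j + 1 ≤ N)]
          exact hx j
        · have hm : j - N < n := by omega
          have hcd' := hcd (j - N) hm
          have hpatj : pat j = c (j - N) := hpatN j (by omega)
          by_cases hjp : j + 1 < p
          · have h2 : (j + 1) % p = j + 1 := Nat.mod_eq_of_lt hjp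
            have hy1 : y (i + 1) = pat (j + 1) := by simp only [hy, h1, h2]
            have hpat1 : pat (j + 1) = c (j - N + 1) := by
              rw [hpatN (j + 1) (by omega)]
              congr 1
              omega
            rw [hyi, hy1, hpatj, hpat1]
            exact hcd'
          · have hjp' : j + 1 = p := by omega
            have h2 : (j + 1) % p = 0 := by rw [hjp', Nat.mod_self]
            have hy1 : y (i + 1) = pat 0 := by simp only [hy, h1, h2]
            have hpat0 : pat 0 = c (j - N + 1) := by
              simp only [hpat, if_pos (Nat.zero_le N)]
              rw [← hcn]
              congr 1
              omega
            rw [hyi, hy1, hpatj, hpat0]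
            exact hcd'
      have hper : ∃ k : ℕ, 1 ≤ k ∧ ∀ i, y (i + k) = y i := by
        refine ⟨p, hp1, fun i => ?_⟩
        simp only [hy, Nat.add_mod_right]
      obtain ⟨q, _, hq⟩ := hPe y hpo hper
      refine ⟨q, fun i hi => ?_⟩
      have h := hq i
      have hyi : y i = x i := by
        simp only [hy, Nat.mod_eq_of_lt (by omega : i < p), hpat, if_pos hi]
      rwa [hyi] at h
    choose q hq using key
    obtain ⟨z, -, φ, hφ, hz⟩ :=
      isCompact_univ.tendsto_subseq (fun N => (Set.mem_univ (q N)))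
    refine ⟨z, fun i => ?_⟩
    have hcont : Filter.Tendsto (fun N => f^[i] (q (φ N))) Filter.atTop (nhds (f^[i] z)) :=
      ((hf.iterate i).continuousAt.tendsto).comp hz
    have hdist : Filter.Tendsto (fun N => dist (f^[i] (q (φ N))) (x i)) Filter.atTop
        (nhds (dist (f^[i] z) (x i))) :=
      hcont.dist tendsto_const_nhds
    have hle : dist (f^[i] z) (x i) ≤ ε / 2 := by
      refine le_of_tendsto hdist ?_
      filter_upwards [Filter.eventually_ge_atTop i] with N hN
      exact le_of_lt (hq (φ N) i (le_trans hN (hφ.le_apply)))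
    linarith
  refine ⟨shadow, ?_⟩
  rintro U V hU hV ⟨u, hu⟩ ⟨v, hv⟩
  obtain ⟨ε1, hε1, hball1⟩ := Metric.isOpen_iff.1 hU u hu
  obtain ⟨ε2, hε2, hball2⟩ := Metric.isOpen_iff.1 hV v hv
  set ε : ℝ := min ε1 ε2 with hεdef
  have hε : 0 < ε := lt_min hε1 hε2
  obtain ⟨δ, hδ, hsh⟩ := shadow ε hε
  obtain ⟨n, hn1, c, hc0, hcn, hcd⟩ := hct δ hδ u v
  set w : ℕ → X := fun i => if i ≤ n then c i else f^[i - n] v with hw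
  have hwn : w n = v := by simp only [hw, if_pos (le_refl n), hcn]
  have hpo : ∀ i, dist (f (w i)) (w (i + 1)) < δ := by
    intro i
    rcases lt_trichotomy i n with h | h | h
    · have : w i = c i := by simp only [hw, if_pos (le_of_lt h)]
      have h2 : w (i + 1) = c (i + 1) := by simp only [hw, if_pos (by omega : i + 1 ≤ n)]
      rw [this, h2]
      exact hcd i h
    · subst h
      have h2 : w (i + 1) = f v := by
        simp only [hw, if_neg (by omega : ¬ i + 1 ≤ i), Nat.add_sub_cancel_left,
          Function.iterate_one]
      rw [hwn, h2]
      simpa using hδ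
    · have h1 : w i = f^[i - n] v := by simp only [hw, if_neg (by omega : ¬ i ≤ n)]
      have h2 : w (i + 1) = f^[i + 1 - n] v := by
        simp only [hw, if_neg (by omega : ¬ i + 1 ≤ n)]
      rw [h1, h2, show i + 1 - n = (i - n) + 1 from by omega,
        Function.iterate_succ_apply']
      simpa using hδ
  obtain ⟨z, hz⟩ := hsh w hpo
  have hz0 : z ∈ U := by
    have := hz 0
    simp only [Function.iterate_zero, id_eq] at this
    have hw0 : w 0 = u := by simp only [hw, if_pos (Nat.zero_le n), hc0]
    rw [hw0] at this
    exact hball1 (lt_of_lt_of_le this (min_le_left _ _))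
  have hzn : f^[n] z ∈ V := by
    have := hz n
    rw [hwn] at this
    exact hball2 (lt_of_lt_of_le this (min_le_right _ _))
  exact ⟨n, hn1, f^[n] z, ⟨z, hz0, rfl⟩, hzn⟩
end
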